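/- arXiv:2005.03853 — 4 statements merged into one kernel-verified Lean document; each statement's English description precedes it below -/
import Mathlib

section
/- A vector x in R^E (indexed by the edges of a graph G) lies in the metric polytope MET(G) if and only if x(e) ≥ 0 for every edge e, and for every cycle C in G and every edge e in C, x(e) ≤ Σ_{ẽ ∈ C, ẽ ≠ e} x(ẽ). -/
/-!
Given a pseudometric `d` extending `x`, removing an edge `e = s(a, b)` from a closed walk leaves a
walk from `b` back to `a`, so `x e = d a b` is at most the weight of the rest by the triangle
inequality. Conversely, if `x` is nonnegative and satisfies the cycle inequalities, the
shortest-walk distance (capped by a constant `M ≥ max x` between different components) is a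
pseudometric, and it equals `x` on every edge `uv`: a shortest `u`-`v` walk may be taken to be a
path, and either that path contains `uv` or it closes `uv` into a cycle.
-/

namespace SimpleGraph

variable {V : Type*} {G : SimpleGraph V} {x : Sym2 V → ℝ} {u v w : V}

namespace Walk

variable (x) in
def weight (p : G.Walk u v) : ℝ := (p.edges.map x).sum

@[simp]
lemma weight_nil : (nil : G.Walk u u).weight x = 0 := rfl

@[simp]
lemma weight_cons (h : G.Adj u v) (p : G.Walk v w) :
    (cons h p).weight x = x s(u, v) + p.weight x := by
  simp [weight]

lemma weight_append (p : G.Walk u v) (q : G.Walk v w) :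
    (p.append q).weight x = p.weight x + q.weight x := by
  simp [weight, edges_append]

lemma weight_reverse (p : G.Walk u v) : p.reverse.weight x = p.weight x := by
  simp [weight, edges_reverse, List.sum_reverse]

section Nonneg

variable (hx : ∀ e ∈ G.edgeSet, 0 ≤ x e)
include hx

lemma nonneg_of_mem_map_edges (p : G.Walk u v) : ∀ r ∈ p.edges.map x, 0 ≤ r := by
  simp only [List.mem_map, forall_exists_index, and_imp]
  rintro _ e he rfl
  exact hx e (p.edges_subset_edgeSet he)

lemma weight_nonneg (p : G.Walk u v) : 0 ≤ p.weight x :=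
  List.sum_nonneg (nonneg_of_mem_map_edges hx p)

lemma le_weight_of_mem_edges {p : G.Walk u v} {e : Sym2 V} (he : e ∈ p.edges) :
    x e ≤ p.weight x :=
  List.single_le_sum (nonneg_of_mem_map_edges hx p) _ (List.mem_map_of_mem he)

lemma weight_bypass_le [DecidableEq V] (p : G.Walk u v) : p.bypass.weight x ≤ p.weight x :=
  (p.edges_bypass_sublist_edges.map x).sum_le_sum (nonneg_of_mem_map_edges hx p)

end Nonneg

section Pseudometric

variable {d : V → V → ℝ} (h0 : ∀ v, d v v = 0) (hsymm : ∀ u v, d u v = d v u)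
  (htri : ∀ u v w, d u w ≤ d u v + d v w) (hxd : ∀ u v, G.Adj u v → x s(u, v) = d u v)
include htri hxd

include h0 in
lemma dist_le_weight : ∀ {u v : V} (p : G.Walk u v), d u v ≤ p.weight x
  | _, _, nil => by simp [h0]
  | u, v, cons (v := w) h p => by
    rw [weight_cons, hxd _ _ h]
    linarith [htri u w v, dist_le_weight p]

include h0 hsymm in
/-- The edges of `p` other than `e = s(a, b)`, followed by a return from `v` to `u`, form a walk
from `b` to `a`. -/
lemma le_dist_add_sum_erase [DecidableEq V] :
    ∀ {u v : V} (p : G.Walk u v) {e : Sym2 V}, e ∈ p.edges →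
      x e ≤ d u v + ((p.edges.erase e).map x).sum
  | _, _, nil, _, he => by simp at he
  | u, v, cons (v := w) h p, e, he => by
    rw [edges_cons, List.erase_cons]
    by_cases hhead : s(u, w) = e
    · subst hhead
      simp only [beq_self_eq_true, if_true]
      rw [hxd _ _ h]
      have hp : d w v ≤ (p.edges.map x).sum := dist_le_weight h0 htri hxd p
      linarith [htri u v w, hsymm v w]
    · have he' : e ∈ p.edges := by simpa [edges_cons, Ne.symm hhead] using he
      simp only [beq_iff_eq, hhead, if_false, List.map_cons, List.sum_cons]
      rw [hxd _ _ h]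
      linarith [htri w u v, hsymm w u, le_dist_add_sum_erase p he']

end Pseudometric

end Walk

variable (G x) in
def CycleInequalities [DecidableEq V] : Prop :=
  ∀ (v : V) (p : G.Walk v v), p.IsCircuit →
    ∀ e ∈ p.edges, x e ≤ ((p.edges.erase e).map x).sum

lemma le_weight_of_adj [DecidableEq V] (hx : ∀ e ∈ G.edgeSet, 0 ≤ x e)
    (hcyc : CycleInequalities G x) (h : G.Adj u v) (p : G.Walk v u) : x s(u, v) ≤ p.weight x := by
  refine le_trans ?_ (p.weight_bypass_le hx)
  by_cases he : s(u, v) ∈ p.bypass.edges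
  · exact Walk.le_weight_of_mem_edges hx he
  · have hcycle : (Walk.cons h p.bypass).IsCycle :=
      (Walk.cons_isCycle_iff _ h).2 ⟨p.bypass_isPath, he⟩
    simpa [Walk.weight] using hcyc u _ hcycle.isCircuit s(u, v) (by simp)

variable (G x) in
/-- The cap `M` is the distance between different components; it keeps the infimum away from the
junk value `sInf ∅ = 0`. -/
noncomputable def truncDist (M : ℝ) (u v : V) : ℝ :=
  sInf (insert M (Set.range fun p : G.Walk u v => p.weight x))

section TruncDist

variable {M : ℝ}

lemma le_truncDist {c : ℝ} (hcM : c ≤ M) (hc : ∀ p : G.Walk u v, c ≤ p.weight x) :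
    c ≤ truncDist G x M u v :=
  le_csInf (Set.insert_nonempty _ _) <| by simpa [Set.forall_mem_insert] using ⟨hcM, hc⟩

lemma truncDist_comm (u v : V) : truncDist G x M u v = truncDist G x M v u := by
  have hrange : ∀ u v : V, Set.range (fun p : G.Walk u v => p.weight x) ⊆
      Set.range fun p : G.Walk v u => p.weight x := by
    rintro u v _ ⟨p, rfl⟩
    exact ⟨p.reverse, p.weight_reverse⟩
  rw [truncDist, truncDist, (hrange u v).antisymm (hrange v u)]

variable (hx : ∀ e ∈ G.edgeSet, 0 ≤ x e) (hM : 0 ≤ M)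
include hx hM

lemma bddBelow_truncDist_set (u v : V) :
    BddBelow (insert M (Set.range fun p : G.Walk u v => p.weight x)) :=
  ⟨0, by simpa [lowerBounds, Set.forall_mem_insert] using ⟨hM, Walk.weight_nonneg hx⟩⟩

lemma truncDist_le_weight (p : G.Walk u v) : truncDist G x M u v ≤ p.weight x :=
  csInf_le (bddBelow_truncDist_set hx hM u v) (Set.mem_insert_of_mem _ ⟨p, rfl⟩)

lemma truncDist_le_cap (u v : V) : truncDist G x M u v ≤ M :=
  csInf_le (bddBelow_truncDist_set hx hM u v) (Set.mem_insert _ _)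

lemma truncDist_nonneg (u v : V) : 0 ≤ truncDist G x M u v :=
  le_truncDist hM (Walk.weight_nonneg hx)

lemma truncDist_self (v : V) : truncDist G x M v v = 0 :=
  le_antisymm (by simpa using truncDist_le_weight hx hM (Walk.nil : G.Walk v v))
    (truncDist_nonneg hx hM v v)

lemma truncDist_triangle (u v w : V) :
    truncDist G x M u w ≤ truncDist G x M u v + truncDist G x M v w := by
  rw [show truncDist G x M u v + truncDist G x M v w = _ from
    (csInf_add (Set.insert_nonempty _ _) (bddBelow_truncDist_set hx hM u v)
      (Set.insert_nonempty _ _) (bddBelow_truncDist_set hx hM v w)).symm]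
  refine le_csInf ((Set.insert_nonempty _ _).add (Set.insert_nonempty _ _)) ?_
  rintro _ ⟨a, ha, b, hb, rfl⟩
  have hcap := truncDist_le_cap hx hM u w
  rcases ha with ha | ⟨p, rfl⟩ <;> rcases hb with hb | ⟨q, rfl⟩
  · linarith
  · linarith [q.weight_nonneg hx]
  · linarith [p.weight_nonneg hx]
  · exact (truncDist_le_weight hx hM (p.append q)).trans_eq (p.weight_append q)

lemma truncDist_of_adj [DecidableEq V] (hcap : x s(u, v) ≤ M)
    (hcyc : CycleInequalities G x) (h : G.Adj u v) :
    truncDist G x M u v = x s(u, v) :=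
  le_antisymm (by simpa using truncDist_le_weight hx hM (.cons h .nil))
    (le_truncDist hcap fun p => by simpa [Sym2.eq_swap] using le_weight_of_adj hx hcyc h.symm p)

end TruncDist

end SimpleGraph

open SimpleGraph in
/-- x ∈ MET(G) (i.e., x is the restriction to the edges of `G` of a
pseudometric on `V`) iff x is nonnegative on edges and satisfies every cycle
inequality: for every cycle (closed trail) `C` and edge `e ∈ C`,
`x e ≤ ∑_{ẽ ∈ C, ẽ ≠ e} x ẽ`. -/
theorem met_polytope_iff_cycle_inequalities {V : Type*} [Fintype V] [DecidableEq V]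
    (G : SimpleGraph V) (x : Sym2 V → ℝ) :
    ((∀ e ∈ G.edgeSet, 0 ≤ x e) ∧
      (∀ (v : V) (p : G.Walk v v), p.IsCircuit →
        ∀ e ∈ p.edges, x e ≤ ((p.edges.erase e).map x).sum)) ↔
    (∃ d : V → V → ℝ,
      (∀ v, d v v = 0) ∧
      (∀ u v, d u v = d v u) ∧
      (∀ u v, 0 ≤ d u v) ∧
      (∀ u v w, d u w ≤ d u v + d v w) ∧
      (∀ u v, G.Adj u v → x s(u, v) = d u v)) := by
  constructor
  · rintro ⟨hx, hcyc⟩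
    set M := ∑ e, |x e|
    have hM : 0 ≤ M := Finset.sum_nonneg fun e _ => abs_nonneg (x e)
    have hcap (e : Sym2 V) : x e ≤ M := (le_abs_self _).trans <|
      Finset.single_le_sum (fun e _ => abs_nonneg (x e)) (Finset.mem_univ e)
    exact ⟨truncDist G x M, truncDist_self hx hM, truncDist_comm, truncDist_nonneg hx hM,
      truncDist_triangle hx hM, fun u v h => (truncDist_of_adj hx hM (hcap _) hcyc h).symm⟩
  · rintro ⟨d, h0, hsymm, hnn, htri, hxd⟩
    refine ⟨?_, fun v p _ e he => ?_⟩
    · rintro ⟨a, b⟩ h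
      exact hxd a b h ▸ hnn a b
    · simpa [h0] using Walk.le_dist_add_sum_erase h0 hsymm htri hxd p he
end

section
/- If the Project update satisfies c^n = min(z^n_{i(n)}, θ^n) with z^n ≥ 0 and either c^n = θ^n (so ⟨a_{i(n)}, x^{n+1}⟩ = b_{i(n)}) or c^n = z^n_{i(n)} (so ⟨a_{i(n)}, x^{n+1}⟩ ≤ b_{i(n)} and c^n ≥ 0), then the term c^n (b_{i(n)} − ⟨a_{i(n)}, x^{n+1}⟩) is nonnegative, and consequently L(x^{n+1}, z^{n+1}) − L(x^n, z^n) = D_f(x^{n+1}, x^n) + c^n (b_{i(n)} − ⟨a_{i(n)}, x^{n+1}⟩) ≥ 0. -/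
open Matrix

/-- in the Project step, with `cⁿ = min(zⁿ_{i(n)}, θⁿ)`, `zⁿ ≥ 0`, and either
`cⁿ = θⁿ` (so `⟨a_{i(n)}, xⁿ⁺¹⟩ = b_{i(n)}`) or `cⁿ = zⁿ_{i(n)}` (so
`⟨a_{i(n)}, xⁿ⁺¹⟩ ≤ b_{i(n)}` and `cⁿ ≥ 0`), the term `cⁿ(b_{i(n)} - ⟨a_{i(n)}, xⁿ⁺¹⟩)`
is nonnegative, and the Lagrangian `L(x,z) = f x + ⟨z, Ax - b⟩` satisfies
`L(xⁿ⁺¹,zⁿ⁺¹) - L(xⁿ,zⁿ) = D_f(xⁿ⁺¹,xⁿ) + cⁿ(b_{i(n)} - ⟨a_{i(n)}, xⁿ⁺¹⟩) ≥ 0`. -/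
theorem lagrangian_increase {m d : ℕ} (A : Matrix (Fin m) (Fin d) ℝ) (b : Fin m → ℝ)
    (f : (Fin d → ℝ) → ℝ) (g : (Fin d → ℝ) → (Fin d → ℝ))
    -- `g` is the gradient of the (strictly) convex differentiable `f`
    (hconv : ∀ u v : Fin d → ℝ, g v ⬝ᵥ (u - v) ≤ f u - f v)
    (x x' : Fin d → ℝ) (z z' : Fin m → ℝ) (i : Fin m) (c θ : ℝ)
    (hz : ∀ j, 0 ≤ z j)
    (hc : c = min (z i) θ)
    (hcase : (c = θ ∧ A i ⬝ᵥ x' = b i) ∨ (c = z i ∧ A i ⬝ᵥ x' ≤ b i ∧ 0 ≤ c))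
    (hkkt : g x = -(Aᵀ.mulVec z))
    (hgrad : g x' = g x + c • A i)
    (hdual : z' = z - c • (Pi.single i 1 : Fin m → ℝ)) :
    0 ≤ c * (b i - A i ⬝ᵥ x') ∧
    (f x' + z' ⬝ᵥ (A.mulVec x' - b)) - (f x + z ⬝ᵥ (A.mulVec x - b)) =
      (f x' - f x - g x ⬝ᵥ (x' - x)) + c * (b i - A i ⬝ᵥ x') ∧
    0 ≤ (f x' + z' ⬝ᵥ (A.mulVec x' - b)) - (f x + z ⬝ᵥ (A.mulVec x - b)) := by
  have hterm : 0 ≤ c * (b i - A i ⬝ᵥ x') := by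
    rcases hcase with ⟨hcθ, heq⟩ | ⟨hcz, hle, hcnn⟩
    · simp [heq]
    · exact mul_nonneg hcnn (by linarith)
  have h1 : (Pi.single i 1 : Fin m → ℝ) ⬝ᵥ (A.mulVec x' - b) = A i ⬝ᵥ x' - b i := by
    simp [dotProduct, Pi.single_apply, Matrix.mulVec]
  have h2 : Aᵀ.mulVec z ⬝ᵥ (x' - x) = z ⬝ᵥ A.mulVec x' - z ⬝ᵥ A.mulVec x := by
    rw [Matrix.mulVec_transpose, ← Matrix.dotProduct_mulVec, Matrix.mulVec_sub,
      dotProduct_sub]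
  have halg : (f x' + z' ⬝ᵥ (A.mulVec x' - b)) - (f x + z ⬝ᵥ (A.mulVec x - b)) =
      (f x' - f x - g x ⬝ᵥ (x' - x)) + c * (b i - A i ⬝ᵥ x') := by
    subst hdual
    rw [hkkt, neg_dotProduct, sub_dotProduct, smul_dotProduct, h1, h2]
    simp only [dotProduct_sub, smul_eq_mul]
    ring
  refine ⟨hterm, halg, ?_⟩
  have := hconv x' x
  linarith [halg]
end

section
/- If sequences x^n → x* and y^n satisfy ‖x^n − y^n‖_H = o(‖x^n − x*‖_H) and ‖y^{ν+1} − x*‖_H ≤ ρ ‖y^ν − x*‖_H for some ρ ∈ (0,1) for all large ν, then limsup_{ν→∞} ‖x^{ν+1} − x*‖_H / ‖x^ν − x*‖_H ≤ ρ (assuming x^ν ≠ x* for all ν). -/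
open Matrix Filter Topology

/-! By the triangle inequality the errors `aν = ‖xν - x*‖_H` and `dν = ‖yν - x*‖_H` satisfy
`dν / aν → 1`. Hence `a(ν+1) / aν = (d(ν+1) / aν) / (d(ν+1) / a(ν+1)) ≤ ρ (dν / aν) / (d(ν+1) / a(ν+1))`
eventually, and the right-hand side tends to `ρ`. -/

theorem Matrix.PosDef.norm_eq_sqrt_dotProduct_mulVec {ι : Type*} [Fintype ι]
    {H : Matrix ι ι ℝ} (hH : H.PosDef) (v : ι → ℝ) :
    @norm _ (H.toNormedAddCommGroup hH).toNorm v = √(v ⬝ᵥ H *ᵥ v) := by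
  rw [dotProduct_comm]; rfl

theorem tendsto_norm_sub_div_norm_sub_of_tendsto {E : Type*} [SeminormedAddCommGroup E]
    {x y : ℕ → E} {z : E} (hx : ∀ ν, ‖x ν - z‖ ≠ 0)
    (ho : Tendsto (fun ν => ‖x ν - y ν‖ / ‖x ν - z‖) atTop (𝓝 0)) :
    Tendsto (fun ν => ‖y ν - z‖ / ‖x ν - z‖) atTop (𝓝 1) := by
  rw [tendsto_iff_norm_sub_tendsto_zero]
  refine squeeze_zero (fun _ => norm_nonneg _) (fun ν => ?_) ho
  rw [Real.norm_eq_abs, ← div_self (hx ν), ← sub_div, abs_div, abs_norm]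
  gcongr
  simpa only [norm_sub_rev (x ν) (y ν), sub_sub_sub_cancel_right] using
    abs_norm_sub_norm_le (y ν - z) (x ν - z)

theorem limsup_div_le_of_tendsto_div_one {a d : ℕ → ℝ} {ρ : ℝ} (ha : ∀ ν, 0 < a ν)
    (hda : Tendsto (fun ν => d ν / a ν) atTop (𝓝 1))
    (hd : ∀ᶠ ν in atTop, d (ν + 1) ≤ ρ * d ν) :
    limsup (fun ν => a (ν + 1) / a ν) atTop ≤ ρ := by
  have hda' : Tendsto (fun ν => d (ν + 1) / a (ν + 1)) atTop (𝓝 1) :=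
    hda.comp (tendsto_add_atTop_nat 1)
  have hbound : Tendsto (fun ν => ρ * (d ν / a ν) / (d (ν + 1) / a (ν + 1))) atTop (𝓝 ρ) := by
    have h := (hda.const_mul ρ).div hda' one_ne_zero
    rwa [mul_one, div_one] at h
  have hle : ∀ᶠ ν in atTop,
      a (ν + 1) / a ν ≤ ρ * (d ν / a ν) / (d (ν + 1) / a (ν + 1)) := by
    filter_upwards [hd, hda'.eventually (eventually_gt_nhds one_pos)] with ν hν hpos
    have := ha ν
    have := ha (ν + 1)
    rw [le_div_iff₀ hpos]
    calc a (ν + 1) / a ν * (d (ν + 1) / a (ν + 1)) = d (ν + 1) / a ν := by field_simp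
      _ ≤ ρ * d ν / a ν := by gcongr
      _ = ρ * (d ν / a ν) := mul_div_assoc _ _ _
  have hcobdd : IsCoboundedUnder (· ≤ ·) atTop (fun ν => a (ν + 1) / a ν) :=
    isCoboundedUnder_le_of_le atTop fun ν => (div_pos (ha (ν + 1)) (ha ν)).le
  exact (limsup_le_limsup hle hcobdd hbound.isBoundedUnder_le).trans_eq hbound.limsup_eq

theorem rate_transfer_general {n : ℕ} (H : Matrix (Fin n) (Fin n) ℝ) (hH : H.PosDef)
    (normH : (Fin n → ℝ) → ℝ)
    (hnormH : ∀ v, normH v = Real.sqrt (v ⬝ᵥ H.mulVec v))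
    (x y : ℕ → (Fin n → ℝ)) (xstar : Fin n → ℝ) (ρ : ℝ)
    (hne : ∀ ν, x ν ≠ xstar)
    (ho : Tendsto (fun ν => normH (x ν - y ν) / normH (x ν - xstar)) atTop (nhds 0))
    (hcontract : ∀ᶠ ν in atTop, normH (y (ν + 1) - xstar) ≤ ρ * normH (y ν - xstar)) :
    limsup (fun ν => normH (x (ν + 1) - xstar) / normH (x ν - xstar)) atTop ≤ ρ := by
  let NG := H.toNormedAddCommGroup hH
  obtain rfl : normH = @norm _ NG.toNorm :=
    funext fun v => (hnormH v).trans (hH.norm_eq_sqrt_dotProduct_mulVec v).symm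
  have hpos (ν : ℕ) : 0 < @norm _ NG.toNorm (x ν - xstar) :=
    (@norm_pos_iff _ NG.toNormedAddGroup _).mpr (sub_ne_zero.mpr (hne ν))
  have hratio := @tendsto_norm_sub_div_norm_sub_of_tendsto _ NG.toSeminormedAddCommGroup _ _ _
      (fun ν => (hpos ν).ne') ho
  exact limsup_div_le_of_tendsto_div_one (a := fun ν => @norm _ NG.toNorm (x ν - xstar))
    (d := fun ν => @norm _ NG.toNorm (y ν - xstar)) hpos hratio hcontract

/-- if `xⁿ → x*`, `‖xⁿ - yⁿ‖_H = o(‖xⁿ - x*‖_H)`, and eventually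
`‖yν₊₁ - x*‖_H ≤ ρ ‖yν - x*‖_H` for some `ρ ∈ (0,1)`, then
`limsup ‖xν₊₁ - x*‖_H / ‖xν - x*‖_H ≤ ρ` (assuming `xν ≠ x*` for all `ν`). -/
theorem rate_transfer {n : ℕ} (H : Matrix (Fin n) (Fin n) ℝ) (hH : H.PosDef)
    (normH : (Fin n → ℝ) → ℝ)
    (hnormH : ∀ v, normH v = Real.sqrt (v ⬝ᵥ H.mulVec v))
    (x y : ℕ → (Fin n → ℝ)) (xstar : Fin n → ℝ) (ρ : ℝ)
    (hρ : ρ ∈ Set.Ioo (0 : ℝ) 1)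
    (hlim : Tendsto x atTop (nhds xstar))
    (hne : ∀ ν, x ν ≠ xstar)
    (ho : Tendsto (fun ν => normH (x ν - y ν) / normH (x ν - xstar)) atTop (nhds 0))
    (hcontract : ∀ᶠ ν in atTop, normH (y (ν + 1) - xstar) ≤ ρ * normH (y ν - xstar)) :
    limsup (fun ν => normH (x (ν + 1) - xstar) / normH (x ν - xstar)) atTop ≤ ρ :=
  rate_transfer_general H hH normH hnormH x y xstar ρ hne ho hcontract
end

section
/- (Correctness of the shortest-path oracle) Let G = (V,E) be a weighted graph with edge weights w ≥ 0, and let d(i,j) be the shortest-path distance in G. Then w satisfies all cycle inequalities of MET(G) (i.e., for every cycle C and edge e ∈ C, w(e) ≤ Σ_{ẽ∈C, ẽ≠e} w(ẽ)) if and only if for every edge (i,j) ∈ E, w(i,j) ≤ d(i,j). -/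
/-!
A walk from `i` to `j` avoiding the edge `ij` shortens to a path, which closes up with `ij` into a
cycle; the cycle inequality for `ij` on that cycle is the bound `w(i,j) ≤` weight of the path
`≤` weight of the walk (weights are nonnegative). Conversely, cutting a closed walk at an edge `e`
leaves a walk between the endpoints of `e` whose weight is the sum over the other edges.
-/

namespace SimpleGraph.Walk

variable {V : Type*} {G : SimpleGraph V}

lemma exists_edges_eq_append_cons_of_mem_darts {u v : V} {p : G.Walk u v} {d : G.Dart}
    (hd : d ∈ p.darts) :
    ∃ (p₁ : G.Walk u d.fst) (p₂ : G.Walk d.snd v), p.edges = p₁.edges ++ d.edge :: p₂.edges := by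
  induction p with
  | nil => simp at hd
  | cons hab q ih =>
    rw [darts_cons, List.mem_cons] at hd
    rcases hd with rfl | hd
    · exact ⟨nil, q, rfl⟩
    · obtain ⟨p₁, p₂, hq⟩ := ih hd
      exact ⟨cons hab p₁, p₂, by simp [hq]⟩

variable [DecidableEq V] (w : Sym2 V → ℝ)

lemma le_sum_edges_erase_of_forall_le_sum_edges {v : V} {p : G.Walk v v} {e : Sym2 V}
    (he : e ∈ p.edges)
    (hdist : ∀ i j, G.Adj i j → ∀ q : G.Walk i j, w s(i, j) ≤ (q.edges.map w).sum) :
    w e ≤ ((p.edges.erase e).map w).sum := by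
  obtain ⟨d, hd, rfl⟩ := List.mem_map.mp he
  obtain ⟨p₁, p₂, hp⟩ := exists_edges_eq_append_cons_of_mem_darts hd
  have hcut := hdist d.snd d.fst d.adj.symm (p₂.append p₁)
  rw [Sym2.eq_swap] at hcut
  change w d.edge ≤ _ at hcut
  have hsum : (p.edges.map w).sum = w d.edge + ((p₂.append p₁).edges.map w).sum := by
    simp only [hp, edges_append, List.map_append, List.map_cons, List.sum_append, List.sum_cons]
    ring
  linarith [List.sum_map_erase w he]

lemma le_sum_edges_of_cycle_inequalities (hw : ∀ e ∈ G.edgeSet, 0 ≤ w e)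
    (hcycle : ∀ (v : V) (c : G.Walk v v), c.IsCircuit →
      ∀ e ∈ c.edges, w e ≤ ((c.edges.erase e).map w).sum)
    {i j : V} (hij : G.Adj i j) (p : G.Walk i j) :
    w s(i, j) ≤ (p.edges.map w).sum := by
  have hnonneg : ∀ x ∈ p.edges.map w, 0 ≤ x := by
    simpa using fun e he => hw e (p.edges_subset_edgeSet he)
  by_cases hmem : s(i, j) ∈ p.edges
  · exact List.single_le_sum hnonneg _ (List.mem_map_of_mem hmem)
  have hcyc : (cons hij.symm p.bypass).IsCycle :=
    (cons_isCycle_iff _ _).mpr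
      ⟨p.bypass_isPath, fun h => hmem (Sym2.eq_swap ▸ p.edges_bypass_subset_edges h)⟩
  calc w s(i, j) = w s(j, i) := by rw [Sym2.eq_swap]
    _ ≤ (p.bypass.edges.map w).sum := by simpa using hcycle j _ hcyc.isCircuit s(j, i) (by simp)
    _ ≤ (p.edges.map w).sum := (p.edges_bypass_sublist_edges.map w).sum_le_sum hnonneg

end SimpleGraph.Walk

theorem cycle_inequalities_iff_shortest_path_general {V : Type*} [DecidableEq V]
    (G : SimpleGraph V) (w : Sym2 V → ℝ) (hw : ∀ e ∈ G.edgeSet, 0 ≤ w e) :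
    (∀ (v : V) (p : G.Walk v v), p.IsCircuit →
      ∀ e ∈ p.edges, w e ≤ ((p.edges.erase e).map w).sum) ↔
    (∀ i j : V, G.Adj i j → ∀ p : G.Walk i j, w s(i, j) ≤ (p.edges.map w).sum) :=
  ⟨fun hcycle _ _ hij p => SimpleGraph.Walk.le_sum_edges_of_cycle_inequalities w hw hcycle hij p,
    fun hdist _ _ _ _ he =>
      SimpleGraph.Walk.le_sum_edges_erase_of_forall_le_sum_edges w he hdist⟩

/-- correctness of the shortest-path oracle: nonnegative edge weights `w`
on a graph `G` satisfy all cycle inequalities (for every cycle `C` — a closed walk with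
distinct edges — and every `e ∈ C`, `w e ≤ ∑_{ẽ ∈ C, ẽ ≠ e} w ẽ`) iff for every edge
`(i,j)`, `w(i,j)` is at most the shortest-path distance from `i` to `j`, i.e. `w(i,j)`
is at most the total weight of every walk from `i` to `j`. -/
theorem cycle_inequalities_iff_shortest_path {V : Type*} [Fintype V] [DecidableEq V]
    (G : SimpleGraph V) (w : Sym2 V → ℝ) (hw : ∀ e ∈ G.edgeSet, 0 ≤ w e) :
    (∀ (v : V) (p : G.Walk v v), p.IsCircuit →
      ∀ e ∈ p.edges, w e ≤ ((p.edges.erase e).map w).sum) ↔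
    (∀ i j : V, G.Adj i j → ∀ p : G.Walk i j, w s(i, j) ≤ (p.edges.map w).sum) :=
  cycle_inequalities_iff_shortest_path_general G w hw
end
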